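/- Let G be a group acting acylindrically on a hyperbolic geodesic metric space X and let f ∈ G be loxodromic with strongly contracting quasi-geodesic axis α in X (there exist constants B', K such that for every geodesic γ at distance at least K from α, the nearest-point projection of γ to α has diameter at most B'). Let H ≤ G be a subgroup whose orbit Hx_0 is ν-quasi-convex in X, the action of G on X is metrically proper, and ⟨f⟩ ∩ gHg^{-1} = {1} for all g ∈ G. Then there exists a constant B = B(f, H, ν, K) such that for all g ∈ G and all points x_1, x_2 ∈ α with d(x_i, gHx_0) ≤ K (i=1,2), one has d(x_1, x_2) ≤ B. -/

import Mathlib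

open Set Metric

def IsGeodesicOn {X : Type*} [MetricSpace X] (γ : ℝ → X) (a b : ℝ) : Prop :=
  ∀ s ∈ Set.Icc a b, ∀ t ∈ Set.Icc a b, dist (γ s) (γ t) = |s - t|

def QuasiConvexSet {X : Type*} [MetricSpace X] (σ : ℝ) (Y : Set X) : Prop :=
  ∀ (γ : ℝ → X) (n : ℝ), IsGeodesicOn γ 0 n → γ 0 ∈ Y → γ n ∈ Y →
    ∀ t ∈ Set.Icc (0:ℝ) n, ∃ y ∈ Y, dist (γ t) y ≤ σ


/-!
Properness makes `⟨f⟩` act coboundedly on its axis: the parameters of the points `f ^ n • α 0`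
move by bounded steps and, `f` having infinite order, escape to infinity, so every point of `α`
is moved within a uniform distance `C` of `α 0` by some power of `f`. If `x₁, x₂ ∈ α` lie near
`gh₁·x₀` and `gh₂·x₀`, the powers `f ^ mᵢ` doing this for `xᵢ` turn `f ^ mᵢ * g * hᵢ` into
elements moving `x₀` near `α 0`; these form a finite set, and
`(f ^ m₁ g h₁)⁻¹ f ^ (m₁ - m₂) (f ^ m₂ g h₂) ∈ H`. As `⟨f⟩` meets each conjugate of `H`
trivially, such a pair determines `m₁ - m₂`, which therefore ranges over a finite set; this
bounds `dist x₁ x₂`.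
-/

open Filter

theorem exists_abs_sub_le_of_tendsto_atTop {p : ℕ → ℝ} {Δ s : ℝ}
    (hstep : ∀ n, |p (n + 1) - p n| ≤ Δ) (hp : Tendsto p atTop atTop) (hs : p 0 ≤ s) :
    ∃ k, |p k - s| ≤ Δ := by
  obtain ⟨n, hn⟩ := (hp.eventually_ge_atTop s).exists
  induction n with
  | zero =>
    refine ⟨0, ?_⟩
    rw [le_antisymm hs hn, sub_self, abs_zero]
    exact (abs_nonneg _).trans (hstep 0)
  | succ n ih =>
    by_cases h : s ≤ p n
    · exact ih h
    · have := abs_le.mp (hstep n)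
      exact ⟨n + 1, abs_le.mpr ⟨by linarith, by linarith⟩⟩

theorem tendsto_atTop_or_atBot_of_tendsto_abs {p : ℕ → ℝ} {Δ : ℝ}
    (hstep : ∀ n, |p (n + 1) - p n| ≤ Δ) (hp : Tendsto (fun n => |p n|) atTop atTop) :
    Tendsto p atTop atTop ∨ Tendsto p atTop atBot := by
  obtain ⟨N, hN⟩ := eventually_atTop.mp (hp.eventually_gt_atTop Δ)
  -- beyond `N` a single step is too short to jump across `[-Δ, Δ]`
  have hstay : ∀ n ≥ N, (0 < p n → 0 < p (n + 1)) ∧ (p n < 0 → p (n + 1) < 0) := by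
    intro n hn
    have hbig := hN n hn
    have := abs_le.mp (hstep n)
    constructor <;> intro h
    · rw [abs_of_pos h] at hbig; linarith
    · rw [abs_of_neg h] at hbig; linarith
  have hsign : ∀ n ≥ N, (0 < p N → 0 < p n) ∧ (p N < 0 → p n < 0) := by
    intro n hn
    induction n, hn using Nat.le_induction with
    | base => exact ⟨id, id⟩
    | succ n hn ih => exact ⟨fun h => (hstay n hn).1 (ih.1 h), fun h => (hstay n hn).2 (ih.2 h)⟩
  have hN0 : p N ≠ 0 := abs_pos.mp (((abs_nonneg _).trans (hstep 0)).trans_lt (hN N le_rfl))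
  rcases hN0.lt_or_gt with hneg | hpos
  · refine .inr <| (tendsto_neg_atTop_atBot.comp hp).congr' <| eventually_atTop.mpr
      ⟨N, fun n hn => ?_⟩
    simp [abs_of_neg ((hsign n hn).2 hneg)]
  · exact .inl <| hp.congr' <| eventually_atTop.mpr
      ⟨N, fun n hn => abs_of_pos ((hsign n hn).1 hpos)⟩

theorem exists_abs_sub_le_of_tendsto_atTop_of_abs_sub_le {p q : ℕ → ℝ} {Δ D : ℝ}
    (hstep : ∀ n, |p (n + 1) - p n| ≤ Δ) (hp : Tendsto p atTop atTop)
    (hq : ∀ n, |q n - p n| ≤ D) :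
    ∃ n k, |p k - q n| ≤ Δ := by
  have hq' : Tendsto q atTop atTop :=
    tendsto_atTop_mono (fun n => by linarith [(abs_le.mp (hq n)).1])
      (tendsto_atTop_add_const_right _ (-D) hp)
  obtain ⟨n, hn⟩ := (hq'.eventually_ge_atTop (p 0)).exists
  obtain ⟨k, hk⟩ := exists_abs_sub_le_of_tendsto_atTop hstep hp hn
  exact ⟨n, k, hk⟩

theorem exists_abs_sub_le_of_tendsto_abs_of_abs_sub_le {p q : ℕ → ℝ} {Δ D : ℝ}
    (hstep : ∀ n, |p (n + 1) - p n| ≤ Δ) (hp : Tendsto (fun n => |p n|) atTop atTop)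
    (hq : ∀ n, |q n - p n| ≤ D) :
    ∃ n k, |p k - q n| ≤ Δ := by
  rcases tendsto_atTop_or_atBot_of_tendsto_abs hstep hp with hp | hp
  · exact exists_abs_sub_le_of_tendsto_atTop_of_abs_sub_le hstep hp hq
  · obtain ⟨n, k, h⟩ := exists_abs_sub_le_of_tendsto_atTop_of_abs_sub_le (p := -p) (q := -q)
      (by simpa only [Pi.neg_apply, neg_sub_neg, abs_sub_comm] using hstep)
      (tendsto_neg_atBot_atTop.comp hp)
      (by simpa only [Pi.neg_apply, neg_sub_neg, abs_sub_comm] using hq)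
    exact ⟨n, k, by simpa only [Pi.neg_apply, neg_sub_neg, abs_sub_comm] using h⟩

section Action

variable {G X : Type*} [Group G] [MulAction G X]

theorem iterate_apply_eq_pow_smul {β : Type*} {f : G} {α : β → X} {σ : β → β}
    (hσ : ∀ t, α (σ t) = f • α t) (n : ℕ) (t : β) : α (σ^[n] t) = f ^ n • α t := by
  rw [← smul_iterate_apply]
  exact Function.Semiconj.iterate_right (f := α) (gb := (f • ·)) hσ n t

variable [MetricSpace X]

theorem finite_setOf_dist_smul_le
    (hproper : ∀ B : Set X, Bornology.IsBounded B → {g : G | ∃ x ∈ B, g • x ∈ B}.Finite)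
    (x y : X) (r : ℝ) : {g : G | dist (g • x) y ≤ r}.Finite :=
  (hproper _ (isBounded_closedBall (x := y) (r := max r (dist x y)))).subset fun _ hg =>
    ⟨x, mem_closedBall.mpr (le_max_right _ _), mem_closedBall.mpr (hg.trans (le_max_left _ _))⟩

section Axis

variable {f : G} {α : ℝ → X} {σ : ℝ → ℝ} {L c : ℝ}

theorem tendsto_abs_iterate_atTop
    (hproper : ∀ B : Set X, Bornology.IsBounded B → {g : G | ∃ x ∈ B, g • x ∈ B}.Finite)
    (hf : ¬IsOfFinOrder f) (hL : 0 ≤ L)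
    (hupper : ∀ s t, dist (α s) (α t) ≤ L * |s - t| + c) (hσ : ∀ t, α (σ t) = f • α t) :
    Tendsto (fun n => |σ^[n] 0|) atTop atTop := by
  refine tendsto_atTop.mpr fun T => ?_
  rw [← Nat.cofinite_eq_atTop, eventually_cofinite]
  refine ((finite_setOf_dist_smul_le hproper (α 0) (α 0) (L * T + c)).preimage
    (injective_pow_iff_not_isOfFinOrder.mpr hf).injOn).subset fun n hn => ?_
  have hT : |σ^[n] 0| ≤ T := (not_le.mp hn).le
  have := hupper (σ^[n] 0) 0
  rw [iterate_apply_eq_pow_smul hσ, sub_zero] at this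
  exact this.trans (by gcongr)

theorem exists_zpow_smul_dist_le (hiso : ∀ g : G, Isometry (fun x : X => g • x)) (hL : 0 < L)
    (hqg : ∀ s t, |s - t| / L - c ≤ dist (α s) (α t) ∧ dist (α s) (α t) ≤ L * |s - t| + c)
    (hσ : ∀ t, α (σ t) = f • α t) (hσ0 : Tendsto (fun n => |σ^[n] 0|) atTop atTop) :
    ∃ C, ∀ s, ∃ m : ℤ, dist (f ^ m • α s) (α 0) ≤ C := by
  have hparam : ∀ s t, |s - t| ≤ L * (dist (α s) (α t) + c) := fun s t => by
    have := (hqg s t).1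
    rw [sub_le_iff_le_add, div_le_iff₀ hL] at this
    linarith
  have hshift : ∀ n s t, dist (α (σ^[n] s)) (α (σ^[n] t)) = dist (α s) (α t) := fun n s t => by
    rw [iterate_apply_eq_pow_smul hσ, iterate_apply_eq_pow_smul hσ, (hiso _).dist_eq]
  set Δ := L * (dist (f • α 0) (α 0) + c)
  refine ⟨L * Δ + c, fun s => ?_⟩
  obtain ⟨n, k, hnk⟩ := exists_abs_sub_le_of_tendsto_abs_of_abs_sub_le
    (q := fun n => σ^[n] s) (D := L * (dist (α s) (α 0) + c))
    (fun n => by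
      have := hparam (σ^[n + 1] 0) (σ^[n] 0)
      rwa [Function.iterate_succ_apply, hshift, hσ] at this)
    hσ0 (fun n => by simpa only [hshift] using hparam (σ^[n] s) (σ^[n] 0))
  refine ⟨n - k, ?_⟩
  calc dist (f ^ ((n : ℤ) - k) • α s) (α 0)
      = dist (f ^ n • α s) (f ^ k • α 0) := by
        rw [← (hiso (f ^ k)).dist_eq, smul_smul, ← zpow_natCast f k, ← zpow_add,
          add_sub_cancel, zpow_natCast]
    _ = dist (α (σ^[k] 0)) (α (σ^[n] s)) := by
        rw [iterate_apply_eq_pow_smul hσ, iterate_apply_eq_pow_smul hσ, dist_comm]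
    _ ≤ L * Δ + c := (hqg _ _).2.trans (by gcongr)

end Axis

section Coset

variable {H : Subgroup G} {f : G}

theorem subsingleton_setOf_mul_zpow_mul_mem
    (hfree : ∀ g : G, ∀ h ∈ H, ∀ n : ℤ, f ^ n = g * h * g⁻¹ → n = 0) (a b : G) :
    {d : ℤ | a * f ^ d * b ∈ H}.Subsingleton := by
  intro d hd d' hd'
  have := hfree a⁻¹ _ (H.mul_mem hd (H.inv_mem hd')) (d - d') (by group)
  omega

theorem finite_setOf_exists_inv_mul_zpow_mul_mem
    (hfree : ∀ g : G, ∀ h ∈ H, ∀ n : ℤ, f ^ n = g * h * g⁻¹ → n = 0) {S : Set G}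
    (hS : S.Finite) : {d : ℤ | ∃ a ∈ S, ∃ b ∈ S, a⁻¹ * f ^ d * b ∈ H}.Finite := by
  refine (hS.biUnion fun a _ => hS.biUnion fun b _ =>
    (subsingleton_setOf_mul_zpow_mul_mem hfree a⁻¹ b).finite).subset ?_
  rintro d ⟨a, ha, b, hb, hd⟩
  exact mem_biUnion ha (mem_biUnion hb hd)

theorem exists_dist_le_of_near_coset (hiso : ∀ g : G, Isometry (fun x : X => g • x))
    (hproper : ∀ B : Set X, Bornology.IsBounded B → {g : G | ∃ x ∈ B, g • x ∈ B}.Finite)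
    (hfree : ∀ g : G, ∀ h ∈ H, ∀ n : ℤ, f ^ n = g * h * g⁻¹ → n = 0) {A : Set X} {x₀ y : X}
    {C : ℝ} (hC : ∀ x ∈ A, ∃ m : ℤ, dist (f ^ m • x) y ≤ C) (K : ℝ) :
    ∃ B : ℝ, ∀ g : G, ∀ x₁ ∈ A, ∀ x₂ ∈ A,
      (∃ h ∈ H, dist x₁ ((g * h) • x₀) ≤ K) → (∃ h ∈ H, dist x₂ ((g * h) • x₀) ≤ K) →
        dist x₁ x₂ ≤ B := by
  set S := {w : G | dist (w • x₀) y ≤ K + C}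
  have hS : ∀ {x : X} {m : ℤ} {g : G}, dist (f ^ m • x) y ≤ C → dist x (g • x₀) ≤ K →
      f ^ m * g ∈ S := by
    intro x m g hm hg
    calc dist ((f ^ m * g) • x₀) y ≤ dist (f ^ m • g • x₀) (f ^ m • x) + dist (f ^ m • x) y := by
          rw [mul_smul]; exact dist_triangle _ _ _
      _ ≤ K + C := by rw [(hiso _).dist_eq, dist_comm]; gcongr
  obtain ⟨U, hU⟩ := ((finite_setOf_exists_inv_mul_zpow_mul_mem hfree
    (finite_setOf_dist_smul_le hproper x₀ y (K + C))).image fun d => dist y (f ^ d • y)).bddAbove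
  refine ⟨C + U + C, ?_⟩
  rintro g x₁ hx₁ x₂ hx₂ ⟨h₁, hh₁, hd₁⟩ ⟨h₂, hh₂, hd₂⟩
  obtain ⟨m₁, hm₁⟩ := hC x₁ hx₁
  obtain ⟨m₂, hm₂⟩ := hC x₂ hx₂
  have hd : dist y (f ^ (m₁ - m₂) • y) ≤ U := hU ⟨m₁ - m₂, ⟨_, hS hm₁ hd₁, _, hS hm₂ hd₂, by
    rw [show (f ^ m₁ * (g * h₁))⁻¹ * f ^ (m₁ - m₂) * (f ^ m₂ * (g * h₂)) = h₁⁻¹ * h₂ by group]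
    exact H.mul_mem (H.inv_mem hh₁) hh₂⟩, rfl⟩
  have hx₂' : f ^ m₁ • x₂ = f ^ (m₁ - m₂) • f ^ m₂ • x₂ := by
    rw [smul_smul, ← zpow_add, sub_add_cancel]
  calc dist x₁ x₂ = dist (f ^ m₁ • x₁) (f ^ m₁ • x₂) := ((hiso _).dist_eq _ _).symm
    _ ≤ dist (f ^ m₁ • x₁) y + dist y (f ^ (m₁ - m₂) • y)
        + dist (f ^ (m₁ - m₂) • y) (f ^ m₁ • x₂) := dist_triangle4 _ _ _ _
    _ ≤ C + U + C := by
        rw [hx₂', (hiso _).dist_eq, dist_comm y (f ^ m₂ • x₂)]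
        gcongr

end Coset

end Action

theorem bounded_axis_fellow_traveling_general
    {G : Type*} [Group G] {X : Type*} [MetricSpace X] [MulAction G X]
    (hiso : ∀ g : G, Isometry (fun x : X => g • x)) (x₀ : X)
    -- the action is metrically proper
    (hproper : ∀ B : Set X, Bornology.IsBounded B →
      {g : G | ∃ x ∈ B, g • x ∈ B}.Finite)
    (H : Subgroup G)
    (f : G) (α : ℝ → X) (A : Set X) (hA : A = Set.range α)
    -- α is a bi-infinite (lamA, ca)-quasi-geodesic axis for f
    (lamA ca : ℝ) (hlamA : 1 ≤ lamA)
    (hαqg : ∀ s t : ℝ, |s - t| / lamA - ca ≤ dist (α s) (α t) ∧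
      dist (α s) (α t) ≤ lamA * |s - t| + ca)
    (hinv : ∀ t : ℝ, f • α t ∈ A)
    (K : ℝ)
    -- ⟨f⟩ meets every conjugate of H trivially
    (hfree : ∀ g : G, ∀ h ∈ H, ∀ n : ℤ, f ^ n = g * h * g⁻¹ → n = 0) :
    ∃ B : ℝ, ∀ g : G, ∀ x₁ ∈ A, ∀ x₂ ∈ A,
      (∃ h ∈ H, dist x₁ ((g * h) • x₀) ≤ K) → (∃ h ∈ H, dist x₂ ((g * h) • x₀) ≤ K) →
        dist x₁ x₂ ≤ B := by
  subst hA
  choose σ hσ using hinv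
  have hL : 0 < lamA := one_pos.trans_le hlamA
  have hf : ¬IsOfFinOrder f := fun hfin => by
    obtain ⟨n, hn, hfn⟩ := isOfFinOrder_iff_zpow_eq_one.mp hfin
    exact hn (hfree 1 1 H.one_mem n (by rw [hfn]; group))
  obtain ⟨C, hC⟩ := exists_zpow_smul_dist_le hiso hL hαqg hσ
    (tendsto_abs_iterate_atTop hproper hf hL.le (fun s t => (hαqg s t).2) hσ)
  exact exists_dist_le_of_near_coset hiso hproper hfree (by rintro _ ⟨s, rfl⟩; exact hC s) K

/-- The key geometric step of Lemma 6.8 of the paper: if the action of `G` on `X` is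
metrically proper, `f` has a strongly contracting quasi-geodesic axis `A`, the orbit
`H·x₀` is `ν`-quasi-convex, and `⟨f⟩ ∩ gHg⁻¹ = {1}` for all `g`, then there is a uniform
bound `B` on the distance between any two points of `A` lying within `K` of a coset
orbit `gH·x₀`. -/
theorem bounded_axis_fellow_traveling
    {G : Type*} [Group G] {X : Type*} [MetricSpace X] [MulAction G X]
    (hiso : ∀ g : G, Isometry (fun x : X => g • x)) (x₀ : X)
    -- the action is metrically proper
    (hproper : ∀ B : Set X, Bornology.IsBounded B →
      {g : G | ∃ x ∈ B, g • x ∈ B}.Finite)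
    (H : Subgroup G) (ν : ℝ)
    -- the orbit H·x₀ is ν-quasi-convex
    (hqc : QuasiConvexSet ν ((fun h : G => h • x₀) '' (H : Set G)))
    (f : G) (α : ℝ → X) (A : Set X) (hA : A = Set.range α)
    -- α is a bi-infinite (lamA, ca)-quasi-geodesic axis for f
    (lamA ca : ℝ) (hlamA : 1 ≤ lamA) (hca : 0 ≤ ca)
    (hαqg : ∀ s t : ℝ, |s - t| / lamA - ca ≤ dist (α s) (α t) ∧
      dist (α s) (α t) ≤ lamA * |s - t| + ca)
    (hinv : ∀ t : ℝ, f • α t ∈ A)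
    -- A is strongly contracting with constants B', K
    (B' K : ℝ) (hK : 0 < K)
    (hcontr : ∀ (γ : ℝ → X) (n : ℝ), IsGeodesicOn γ 0 n →
      (∀ t ∈ Set.Icc (0:ℝ) n, K ≤ Metric.infDist (γ t) A) →
      ∀ s ∈ Set.Icc (0:ℝ) n, ∀ t ∈ Set.Icc (0:ℝ) n, ∀ p ∈ A, ∀ q ∈ A,
        dist (γ s) p = Metric.infDist (γ s) A → dist (γ t) q = Metric.infDist (γ t) A →
          dist p q ≤ B')
    -- ⟨f⟩ meets every conjugate of H trivially
    (hfree : ∀ g : G, ∀ h ∈ H, ∀ n : ℤ, f ^ n = g * h * g⁻¹ → n = 0) :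
    ∃ B : ℝ, ∀ g : G, ∀ x₁ ∈ A, ∀ x₂ ∈ A,
      (∃ h ∈ H, dist x₁ ((g * h) • x₀) ≤ K) → (∃ h ∈ H, dist x₂ ((g * h) • x₀) ≤ K) →
        dist x₁ x₂ ≤ B :=
  bounded_axis_fellow_traveling_general hiso x₀ hproper H f α A hA lamA ca hlamA hαqg hinv K hfree
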